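/- Let p(s,t) and p(u,v) be two atoms. If there exists an mgu θ of p(s,t) and p(u,v) such that sθ = s, then there exists a relevant mgu ϑ of p(s,t) and p(u,v) such that sϑ = s. -/

import Mathlib

/- ## First-order terms -/

inductive Trm (F : Type) : Type
  | var : ℕ → Trm F
  | fn : F → List (Trm F) → Trm F

/-- A substitution: a mapping from variables to terms. -/
abbrev Subst (F : Type) := ℕ → Trm F

namespace Trm
variable {F : Type}

/-- Application of a substitution to a term. -/
def subst (σ : Subst F) : Trm F → Trm F
  | .var x => σ x
  | .fn f ts => .fn f (ts.attach.map (fun t => t.1.subst σ))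
decreasing_by simp_wf; have := List.sizeOf_lt_of_mem t.2; omega

/-- The set of variables occurring in a term. -/
def vars : Trm F → Set ℕ
  | .var x => {x}
  | .fn _ ts => (ts.attach.map (fun t => t.1.vars)).foldr (· ∪ ·) ∅
decreasing_by simp_wf; have := List.sizeOf_lt_of_mem t.2; omega

/-- The number of occurrences of a variable in a term. -/
def varCount (x : ℕ) : Trm F → ℕ
  | .var y => if y = x then 1 else 0
  | .fn _ ts => (ts.attach.map (fun t => t.1.varCount x)).sum
decreasing_by simp_wf; have := List.sizeOf_lt_of_mem t.2; omega

/-- The subterm relation. -/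
inductive IsSubterm : Trm F → Trm F → Prop
  | refl (t : Trm F) : IsSubterm t t
  | fn {s t : Trm F} {f : F} {ts : List (Trm F)} : t ∈ ts → IsSubterm s t → IsSubterm s (.fn f ts)

end Trm

/- ## Sequences of terms -/

/-- Application of a substitution to a sequence of terms. -/
def substList {F : Type} (σ : Subst F) (ts : List (Trm F)) : List (Trm F) :=
  ts.map (Trm.subst σ)

/-- The set of variables occurring in a sequence of terms. -/
def varsList {F : Type} (ts : List (Trm F)) : Set ℕ := ⋃ t ∈ ts, t.vars

/-- The number of occurrences of a variable in a sequence of terms. -/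
def varCountList {F : Type} (x : ℕ) (ts : List (Trm F)) : ℕ :=
  (ts.map (Trm.varCount x)).sum

/-- A sequence of terms is linear if every variable occurs at most once in it. -/
def LinearList {F : Type} (ts : List (Trm F)) : Prop :=
  ∀ x : ℕ, varCountList x ts ≤ 1

/-- A term occurs in a sequence of terms if it is a subterm of one of its components. -/
def OccursInList {F : Type} (s : Trm F) (ts : List (Trm F)) : Prop :=
  ∃ t ∈ ts, Trm.IsSubterm s t

namespace Subst
variable {F : Type}

/-- The identity (empty) substitution. -/
def id : Subst F := Trm.var

/-- Composition of substitutions: `(comp σ τ)` applies `σ` first, then `τ`. -/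
def comp (σ τ : Subst F) : Subst F := fun x => (σ x).subst τ

/-- The domain of a substitution. -/
def dom (σ : Subst F) : Set ℕ := {x | σ x ≠ Trm.var x}

/-- A substitution has finite domain. -/
def FiniteDom (σ : Subst F) : Prop := σ.dom.Finite

/-- The set of variables of a substitution: its domain together with the
variables occurring in the images of domain variables. -/
def vars (σ : Subst F) : Set ℕ := σ.dom ∪ ⋃ x ∈ σ.dom, (σ x).vars

/-- A renaming: a substitution given by a permutation of the variables. -/
def IsRenaming (σ : Subst F) : Prop := ∃ e : ℕ ≃ ℕ, σ = fun x => Trm.var (e x)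

end Subst

/-- `θ` is a unifier of the sequences of terms `z` and `w`. -/
def IsUnifierList {F : Type} (θ : Subst F) (z w : List (Trm F)) : Prop :=
  substList θ z = substList θ w

/-- `θ` is a most general unifier (mgu) of the sequences of terms `z` and `w`. -/
def IsMguList {F : Type} (θ : Subst F) (z w : List (Trm F)) : Prop :=
  IsUnifierList θ z w ∧ ∀ σ : Subst F, IsUnifierList σ z w → ∃ γ : Subst F, Subst.comp θ γ = σ

/- ## Atoms, queries, clauses, programs (in presence of a fixed mode) -/

/-- An atom `p(s,t)`, where `s` is the sequence of terms filling in the input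
positions and `t` the sequence of terms filling in the output positions
(as determined by the fixed mode of `p`). -/
structure Atom (P F : Type) where
  rel : P
  inp : List (Trm F)
  out : List (Trm F)

namespace Atom
variable {P F : Type}

def subst (σ : Subst F) (A : Atom P F) : Atom P F :=
  ⟨A.rel, substList σ A.inp, substList σ A.out⟩

def vars (A : Atom P F) : Set ℕ := varsList A.inp ∪ varsList A.out

/-- `θ` is a unifier of two atoms. -/
def IsUnifier (θ : Subst F) (A B : Atom P F) : Prop := A.subst θ = B.subst θ

/-- `θ` is a most general unifier of two atoms. -/
def IsMgu (θ : Subst F) (A B : Atom P F) : Prop :=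
  IsUnifier θ A B ∧ ∀ σ : Subst F, IsUnifier σ A B → ∃ γ : Subst F, Subst.comp θ γ = σ

/-- An mgu of two atoms is relevant if its variables are among those of the two atoms. -/
def RelevantFor (θ : Subst F) (A B : Atom P F) : Prop :=
  Subst.vars θ ⊆ A.vars ∪ B.vars

end Atom

/-- A query: a finite sequence of atoms. -/
abbrev Query (P F : Type) := List (Atom P F)

/-- The set of variables of a query. -/
def queryVars {P F : Type} (Q : Query P F) : Set ℕ := ⋃ A ∈ Q, A.vars

/-- `In(Q)`: the sequence of terms filling in the input positions of `Q`. -/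
def queryInp {P F : Type} (Q : Query P F) : List (Trm F) := Q.flatMap Atom.inp

/-- `Out(Q)`: the sequence of terms filling in the output positions of `Q`. -/
def queryOut {P F : Type} (Q : Query P F) : List (Trm F) := Q.flatMap Atom.out

/-- A clause `H ← B`. -/
structure Clause (P F : Type) where
  head : Atom P F
  body : Query P F

namespace Clause
variable {P F : Type}

def subst (σ : Subst F) (c : Clause P F) : Clause P F :=
  ⟨c.head.subst σ, c.body.map (Atom.subst σ)⟩

def vars (c : Clause P F) : Set ℕ := c.head.vars ∪ queryVars c.body

end Clause

/-- A variant of a clause: obtained by applying a renaming. -/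
def IsVariantOf {P F : Type} (c c' : Clause P F) : Prop :=
  ∃ ρ : Subst F, Subst.IsRenaming ρ ∧ c' = c.subst ρ

/-- A program: a finite set of clauses (represented as a list). -/
abbrev Program (P F : Type) := List (Clause P F)

/- ## Nicely- and simply-moded objects -/

/-- A query `p1(s1,t1),…,pn(sn,tn)` is nicely-moded if `t1,…,tn` is a linear
sequence of terms and for all `i`, `Var(si) ∩ ⋃_{j=i}^{n} Var(tj) = ∅`. -/
def NMQuery {P F : Type} (Q : Query P F) : Prop :=
  LinearList (queryOut Q) ∧
  ∀ (i : ℕ) (h : i < Q.length),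
    varsList (Q.get ⟨i, h⟩).inp ∩ varsList (queryOut (Q.drop i)) = ∅

/-- A clause `p(s0,t0) ← Q` is nicely-moded if `Q` is nicely-moded and
`Var(s0)` is disjoint from the output variables of `Q`. -/
def NMClause {P F : Type} (c : Clause P F) : Prop :=
  NMQuery c.body ∧ varsList c.head.inp ∩ varsList (queryOut c.body) = ∅

/-- A program is nicely-moded if all its clauses are. -/
def NMProgram {P F : Type} (Pgm : Program P F) : Prop := ∀ c ∈ Pgm, NMClause c

/-- A query is simply-moded if it is nicely-moded and its sequence of output
terms is a (linear) sequence of variables. -/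
def SMQuery {P F : Type} (Q : Query P F) : Prop :=
  NMQuery Q ∧ ∀ t ∈ queryOut Q, ∃ x : ℕ, t = Trm.var x

/-- A clause is simply-moded if it is nicely-moded and its body is simply-moded. -/
def SMClause {P F : Type} (c : Clause P F) : Prop :=
  NMClause c ∧ SMQuery c.body

/-- A program is simply-moded if all its clauses are. -/
def SMProgram {P F : Type} (Pgm : Program P F) : Prop := ∀ c ∈ Pgm, SMClause c

/- ## Input-consuming derivations -/

/-- `ICStepAt Q k c θ Q'` : the query `Q'` is obtained from `Q` by an
input-consuming derivation step resolving the atom at position `k` with the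
(already renamed-apart) input clause `c`, via the relevant mgu `θ`. -/
def ICStepAt {P F : Type} (Q : Query P F) (k : ℕ) (c : Clause P F) (θ : Subst F)
    (Q' : Query P F) : Prop :=
  ∃ h : k < Q.length,
    Atom.IsMgu θ (Q.get ⟨k, h⟩) c.head ∧
    Atom.RelevantFor θ (Q.get ⟨k, h⟩) c.head ∧
    substList θ (Q.get ⟨k, h⟩).inp = (Q.get ⟨k, h⟩).inp ∧
    Q' = (Q.take k ++ c.body ++ Q.drop (k + 1)).map (Atom.subst θ)

/-- A (possibly partial, possibly infinite) input-consuming derivation of length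
`len` in program `Pgm`: queries `Q i`, selected atom positions `sel i`, input
clauses `cl i` (variants of program clauses) and relevant mgus `sub i`,
satisfying standardization apart. -/
structure ICDeriv {P F : Type} (Pgm : Program P F) (len : ℕ∞) where
  Q : ℕ → Query P F
  sel : ℕ → ℕ
  cl : ℕ → Clause P F
  sub : ℕ → Subst F
  step : ∀ i : ℕ, (i : ℕ∞) < len → ICStepAt (Q i) (sel i) (cl i) (sub i) (Q (i + 1))
  fromProg : ∀ i : ℕ, (i : ℕ∞) < len → ∃ c ∈ Pgm, IsVariantOf c (cl i)
  standApart : ∀ i : ℕ, (i : ℕ∞) < len →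
    Clause.vars (cl i) ∩
      (queryVars (Q 0) ∪ ⋃ j < i, (Clause.vars (cl j) ∪ Subst.vars (sub j))) = ∅

/-- The composition `θ1 θ2 ⋯ θn` of the first `n` step substitutions. -/
def compRange {F : Type} (θ : ℕ → Subst F) : ℕ → Subst F
  | 0 => Subst.id
  | n + 1 => Subst.comp (compRange θ n) (θ n)

/-- There exists an infinite input-consuming derivation of `Pgm ∪ {Q0}`. -/
def InfICDeriv {P F : Type} (Pgm : Program P F) (Q0 : Query P F) : Prop :=
  ∃ d : ICDeriv Pgm ⊤, d.Q 0 = Q0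

/-- A program is input terminating if all its input-consuming derivations
starting in a nicely-moded query are finite. -/
def InputTerminating {P F : Type} (Pgm : Program P F) : Prop :=
  ∀ Q : Query P F, NMQuery Q → ¬ InfICDeriv Pgm Q

/- ## Dependency between predicate symbols -/

/-- `p` is defined in `Pgm` if `p` occurs in the head of one of its clauses. -/
def DefinedIn {P F : Type} (Pgm : Program P F) (p : P) : Prop :=
  ∃ c ∈ Pgm, c.head.rel = p

/-- `p` occurs in `Pgm` (in a head or in a body). -/
def OccursInProg {P F : Type} (Pgm : Program P F) (p : P) : Prop :=
  ∃ c ∈ Pgm, c.head.rel = p ∨ ∃ B ∈ c.body, B.rel = p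

/-- `Pgm` extends `R` if no relation defined in `Pgm` occurs in `R`. -/
def ProgExtends {P F : Type} (Pgm R : Program P F) : Prop :=
  ∀ p : P, DefinedIn Pgm p → ¬ OccursInProg R p

/-- `p` refers to `q` in `Pgm`. -/
def RefersTo {P F : Type} (Pgm : Program P F) (p q : P) : Prop :=
  ∃ c ∈ Pgm, c.head.rel = p ∧ ∃ B ∈ c.body, B.rel = q

/-- `p ⊒ q` : `p` depends on `q` (reflexive-transitive closure of refers-to). -/
def ProgDependsOn {P F : Type} (Pgm : Program P F) : P → P → Prop :=
  Relation.ReflTransGen (RefersTo Pgm)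

/-- `p ≃ q` : `p` and `q` are mutually dependent. -/
def MutDep {P F : Type} (Pgm : Program P F) (p q : P) : Prop :=
  ProgDependsOn Pgm p q ∧ ProgDependsOn Pgm q p

/-- `p ⊐ q` : `p ⊒ q` and not `p ≃ q`. -/
def SqSupset {P F : Type} (Pgm : Program P F) (p q : P) : Prop :=
  ProgDependsOn Pgm p q ∧ ¬ MutDep Pgm p q

/- ## Moded level mappings and quasi recurrency -/

/-- A moded level mapping: a function from atoms to naturals which does not
depend on the output terms (and is invariant under renaming, as it is a
function on the extended Herbrand base). -/
def ModedLevelMapping {P F : Type} (lvl : Atom P F → ℕ) : Prop :=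
  (∀ (p : P) (s t u : List (Trm F)), lvl ⟨p, s, t⟩ = lvl ⟨p, s, u⟩) ∧
  (∀ (A : Atom P F) (ρ : Subst F), Subst.IsRenaming ρ → lvl (A.subst ρ) = lvl A)

/-- A clause is quasi recurrent wrt `lvl` (in program `Pgm`) if for every
instance `H ← A,B,C` of it, if `Rel(H) ≃ Rel(B)` then `|H| > |B|`. -/
def QRClause {P F : Type} (Pgm : Program P F) (lvl : Atom P F → ℕ) (c : Clause P F) : Prop :=
  ∀ θ : Subst F, ∀ B ∈ c.body, MutDep Pgm c.head.rel B.rel →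
    lvl (B.subst θ) < lvl (c.head.subst θ)

/-- A program is quasi recurrent wrt `lvl` if all its clauses are. -/
def QuasiRecurrentWrt {P F : Type} (Pgm : Program P F) (lvl : Atom P F → ℕ) : Prop :=
  ∀ c ∈ Pgm, QRClause Pgm lvl c

/-- A program is quasi recurrent if it is quasi recurrent wrt some moded level mapping. -/
def QuasiRecurrent {P F : Type} (Pgm : Program P F) : Prop :=
  ∃ lvl : Atom P F → ℕ, ModedLevelMapping lvl ∧ QuasiRecurrentWrt Pgm lvl
/- ## IC-trees -/

/-- `Q'` is a resolvent of `Q` and (a renamed-apart variant of) the clause `c`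
with respect to the atom at position `k`, via an input-consuming step. -/
def ICResolventOf {P F : Type} (Q : Query P F) (k : ℕ) (c : Clause P F)
    (Q' : Query P F) : Prop :=
  ∃ (c' : Clause P F) (θ : Subst F),
    IsVariantOf c c' ∧ Clause.vars c' ∩ queryVars Q = ∅ ∧ ICStepAt Q k c' θ Q'

/-- The atom at position `k` of `Q` is input-consuming resolvable wrt clause `c`. -/
def ICResolvable {P F : Type} (Q : Query P F) (k : ℕ) (c : Clause P F) : Prop :=
  ∃ Q' : Query P F, ICResolventOf Q k c Q'

/-- An IC-tree for `Pgm ∪ {Q0}`, represented by the set `T` of its paths from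
the root (a node of the tree is identified with the path reaching it):
its branches are input-consuming derivations of `Pgm ∪ {Q0}`, and every node
has exactly one descendant for every atom of its query and every program
clause wrt which that atom is input-consuming resolvable, this descendant
being a resolvent. -/
structure IsICTree {P F : Type} (Pgm : Program P F) (Q0 : Query P F)
    (T : Set (List (Query P F))) : Prop where
  root : [Q0] ∈ T
  starts : ∀ l ∈ T, ∃ l' : List (Query P F), l = Q0 :: l'
  prefixClosed : ∀ (l : List (Query P F)) (Qn : Query P F), l ++ [Qn] ∈ T → l ≠ [] → l ∈ T
  children : ∀ l ∈ T, ∀ (k : ℕ) (c : Clause P F), c ∈ Pgm →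
    ICResolvable (l.getLastD []) k c →
    ∃! Q' : Query P F, l ++ [Q'] ∈ T ∧ ICResolventOf (l.getLastD []) k c Q'
  childrenOnly : ∀ (l : List (Query P F)) (Q' : Query P F), l ++ [Q'] ∈ T → l ≠ [] →
    ∃ (k : ℕ) (c : Clause P F), c ∈ Pgm ∧ ICResolventOf (l.getLastD []) k c Q'
  branches : ∀ l ∈ T, ∃ d : ICDeriv Pgm ((l.length - 1 : ℕ) : ℕ∞),
    ∀ i < l.length, d.Q i = l.getD i []

/- ## Input-recursive programs -/

/-- A clause `H ← A,B,C` is input-recursive (in `Pgm`) if whenever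
`Rel(H) ≃ Rel(B)` then `Var(In(B)) ⊆ Var(In(H))`. -/
def InputRecursiveClause {P F : Type} (Pgm : Program P F) (c : Clause P F) : Prop :=
  ∀ B ∈ c.body, MutDep Pgm c.head.rel B.rel → varsList B.inp ⊆ varsList c.head.inp

/-- A program is input-recursive if all its clauses are. -/
def InputRecursive {P F : Type} (Pgm : Program P F) : Prop :=
  ∀ c ∈ Pgm, InputRecursiveClause Pgm c

/- ## Auxiliary development: unification theory -/

section Basics
variable {F : Type}
namespace Trm

@[elab_as_elim]
theorem my_ind {P : Trm F → Prop} (hv : ∀ x, P (.var x))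
    (hf : ∀ (f : F) (ts : List (Trm F)), (∀ t ∈ ts, P t) → P (.fn f ts)) :
    ∀ t, P t
  | .var x => hv x
  | .fn f ts => hf f ts (fun t ht => my_ind hv hf t)
decreasing_by have := List.sizeOf_lt_of_mem ht; simp; omega

@[simp] theorem subst_var (σ : Subst F) (x : ℕ) : (Trm.var x).subst σ = σ x := by
  rw [Trm.subst]

@[simp] theorem subst_fn (σ : Subst F) (f : F) (ts : List (Trm F)) :
    (Trm.fn f ts).subst σ = .fn f (ts.map (Trm.subst σ)) := by
  rw [Trm.subst]
  congr 1
  exact List.attach_map_val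

@[simp] theorem vars_var (x : ℕ) : (Trm.var x : Trm F).vars = {x} := by rw [Trm.vars]

theorem mem_vars_fn {y : ℕ} {f : F} {ts : List (Trm F)} :
    y ∈ (Trm.fn f ts).vars ↔ ∃ t ∈ ts, y ∈ t.vars := by
  rw [Trm.vars, List.attach_map_val (l := ts) (f := Trm.vars)]
  induction ts with
  | nil => simp
  | cons a l ih =>
    simp only [List.map_cons, List.foldr_cons, Set.mem_union, ih, List.mem_cons]
    constructor
    · rintro (h | ⟨t, ht, hy⟩)
      exacts [⟨a, Or.inl rfl, h⟩, ⟨t, Or.inr ht, hy⟩]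
    · rintro ⟨t, (rfl | ht), hy⟩
      exacts [Or.inl hy, Or.inr ⟨t, ht, hy⟩]

end Trm
end Basics
section TermLemmas
variable {F : Type}
namespace Trm

theorem subst_subst (σ τ : Subst F) (t : Trm F) :
    (t.subst σ).subst τ = t.subst (Subst.comp σ τ) := by
  induction t using Trm.my_ind with
  | hv x => simp [Subst.comp]
  | hf f ts ih => simp only [subst_fn, List.map_map]; congr 1
                  exact List.map_congr_left fun t ht => ih t ht

theorem subst_id (t : Trm F) : t.subst Subst.id = t := by
  induction t using Trm.my_ind with
  | hv x => simp [Subst.id]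
  | hf f ts ih =>
    simp only [subst_fn]
    rw [List.map_congr_left ih]; simp

theorem subst_congr {σ τ : Subst F} {t : Trm F} (h : ∀ x ∈ t.vars, σ x = τ x) :
    t.subst σ = t.subst τ := by
  induction t using Trm.my_ind with
  | hv x => simpa using h x (by simp)
  | hf f ts ih =>
    simp only [subst_fn]
    congr 1
    exact List.map_congr_left fun t ht =>
      ih t ht (fun x hx => h x (mem_vars_fn.2 ⟨t, ht, hx⟩))

theorem eq_of_subst_eq {σ τ : Subst F} {t : Trm F} (h : t.subst σ = t.subst τ) :
    ∀ x ∈ t.vars, σ x = τ x := by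
  induction t using Trm.my_ind with
  | hv x => intro y hy; simp at hy h; subst hy; simpa using h
  | hf f ts ih =>
    intro y hy
    rcases mem_vars_fn.1 hy with ⟨t, ht, hyt⟩
    simp only [subst_fn, Trm.fn.injEq, true_and] at h
    rw [List.map_eq_map_iff] at h
    exact ih t ht (h t ht) y hyt

theorem subst_eq_self {σ : Subst F} {t : Trm F} (h : ∀ x ∈ t.vars, σ x = .var x) :
    t.subst σ = t := by
  rw [subst_congr (τ := Subst.id) h]; exact subst_id t

theorem eq_var_of_mem_of_subst_self {σ : Subst F} {t : Trm F} (h : t.subst σ = t) :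
    ∀ x ∈ t.vars, σ x = .var x := by
  have := eq_of_subst_eq (σ := σ) (τ := Subst.id) (by rwa [subst_id])
  exact fun x hx => this x hx

theorem mem_vars_subst {σ : Subst F} {t : Trm F} {y : ℕ} :
    y ∈ (t.subst σ).vars ↔ ∃ x ∈ t.vars, y ∈ (σ x).vars := by
  induction t using Trm.my_ind with
  | hv x => simp
  | hf f ts ih =>
    simp only [subst_fn, mem_vars_fn]
    constructor
    · rintro ⟨t', ht', hy⟩
      rcases List.mem_map.1 ht' with ⟨t0, ht0, rfl⟩
      rcases (ih t0 ht0).1 hy with ⟨x, hx, hyx⟩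
      exact ⟨x, ⟨t0, ht0, hx⟩, hyx⟩
    · rintro ⟨x, ⟨t0, ht0, hxt0⟩, hyx⟩
      exact ⟨t0.subst σ, List.mem_map_of_mem ht0, (ih t0 ht0).2 ⟨x, hxt0, hyx⟩⟩

end Trm
end TermLemmas
section SizeVarsF
variable {F : Type}
namespace Trm

/-- Size of a term. -/
def tsize : Trm F → ℕ
  | .var _ => 1
  | .fn _ ts => 1 + (ts.attach.map (fun t => t.1.tsize)).sum
decreasing_by have := List.sizeOf_lt_of_mem t.2; simp_wf; omega

@[simp] theorem tsize_var (x : ℕ) : (Trm.var x : Trm F).tsize = 1 := by rw [tsize]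

@[simp] theorem tsize_fn (f : F) (ts : List (Trm F)) :
    (Trm.fn f ts).tsize = 1 + (ts.map tsize).sum := by
  rw [tsize]; congr 1; exact congrArg List.sum (List.attach_map_val)

theorem tsize_pos (t : Trm F) : 0 < t.tsize := by
  induction t using Trm.my_ind with
  | hv x => simp
  | hf f ts _ => simp

theorem tsize_subst_le {σ : Subst F} {t : Trm F} {x : ℕ} (hx : x ∈ t.vars) :
    (σ x).tsize ≤ (t.subst σ).tsize := by
  induction t using Trm.my_ind with
  | hv y => simp at hx; subst hx; simp
  | hf f ts ih =>
    rcases mem_vars_fn.1 hx with ⟨t0, ht0, hxt0⟩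
    have h1 : (σ x).tsize ≤ (t0.subst σ).tsize := ih t0 ht0 hxt0
    have h2 : (t0.subst σ).tsize ≤ ((ts.map (Trm.subst σ)).map tsize).sum :=
      List.single_le_sum (fun _ _ => Nat.zero_le _) _
        (List.mem_map_of_mem (List.mem_map_of_mem ht0))
    simp only [subst_fn, tsize_fn]
    omega

theorem tsize_subst_lt {σ : Subst F} {t : Trm F} {x : ℕ} (hx : x ∈ t.vars)
    (ht : t ≠ .var x) : (σ x).tsize < (t.subst σ).tsize := by
  cases t with
  | var y => simp at hx; subst hx; simp at ht
  | fn f ts =>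
    rcases mem_vars_fn.1 hx with ⟨t0, ht0, hxt0⟩
    have h1 : (σ x).tsize ≤ (t0.subst σ).tsize := tsize_subst_le hxt0
    have h2 : (t0.subst σ).tsize ≤ ((ts.map (Trm.subst σ)).map tsize).sum :=
      List.single_le_sum (fun _ _ => Nat.zero_le _) _
        (List.mem_map_of_mem (List.mem_map_of_mem ht0))
    simp only [subst_fn, tsize_fn]
    omega

/-- The finite set of variables of a term, as a `Finset`. -/
def varsF : Trm F → Finset ℕ
  | .var x => {x}
  | .fn _ ts => (ts.attach.map (fun t => t.1.varsF)).foldr (· ∪ ·) ∅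
decreasing_by have := List.sizeOf_lt_of_mem t.2; simp_wf; omega

@[simp] theorem varsF_var (x : ℕ) : (Trm.var x : Trm F).varsF = {x} := by rw [varsF]

theorem mem_varsF_fn {y : ℕ} {f : F} {ts : List (Trm F)} :
    y ∈ (Trm.fn f ts).varsF ↔ ∃ t ∈ ts, y ∈ t.varsF := by
  rw [varsF, List.attach_map_val (l := ts) (f := Trm.varsF)]
  induction ts with
  | nil => simp
  | cons a l ih =>
    simp only [List.map_cons, List.foldr_cons, Finset.mem_union, ih, List.mem_cons]
    constructor
    · rintro (h | ⟨t, ht, hy⟩)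
      exacts [⟨a, Or.inl rfl, h⟩, ⟨t, Or.inr ht, hy⟩]
    · rintro ⟨t, (rfl | ht), hy⟩
      exacts [Or.inl hy, Or.inr ⟨t, ht, hy⟩]

theorem mem_varsF_iff {y : ℕ} {t : Trm F} : y ∈ t.varsF ↔ y ∈ t.vars := by
  induction t using Trm.my_ind with
  | hv x => simp
  | hf f ts ih =>
    rw [mem_varsF_fn, mem_vars_fn]
    exact exists_congr fun t => and_congr_right fun ht => ih t ht

end Trm
end SizeVarsF

section SubstLemmas
variable {F : Type}
namespace Subst

theorem comp_assoc (σ τ ρ : Subst F) : comp (comp σ τ) ρ = comp σ (comp τ ρ) := by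
  funext x
  simp [comp, Trm.subst_subst]

@[simp] theorem id_comp (σ : Subst F) : comp Subst.id σ = σ := by
  funext x; simp [comp, Subst.id]

@[simp] theorem comp_id (σ : Subst F) : comp σ Subst.id = σ := by
  funext x; simp [comp, Trm.subst_id]

theorem vars_comp_subset (σ τ : Subst F) : (comp σ τ).vars ⊆ σ.vars ∪ τ.vars := by
  intro y hy
  rcases hy with hy | hy
  · have hy' : Subst.comp σ τ y ≠ .var y := hy
    by_cases hσ : σ y = .var y
    · have hne : τ y ≠ .var y := by
        intro h; exact hy' (by simp [comp, hσ, h])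
      exact Or.inr (Or.inl hne)
    · exact Or.inl (Or.inl hσ)
  · rcases Set.mem_iUnion₂.1 hy with ⟨x, hx, hyx⟩
    have hx' : Subst.comp σ τ x ≠ .var x := hx
    have hyx' : y ∈ ((σ x).subst τ).vars := hyx
    rcases Trm.mem_vars_subst.1 hyx' with ⟨z, hz, hyz⟩
    by_cases hτ : τ z = .var z
    · have hyzz : y = z := by rw [hτ] at hyz; simpa using hyz
      by_cases hσ : σ x = .var x
      · have hzx : z = x := by rw [hσ] at hz; simpa using hz
        have hne : τ x ≠ .var x := by
          intro h; exact hx' (by simp [comp, hσ, h])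
        exact Or.inr (Or.inl (by rw [hyzz, hzx]; exact hne))
      · exact Or.inl (Or.inr (Set.mem_biUnion hσ (by rw [hyzz]; exact hz)))
    · exact Or.inr (Or.inr (Set.mem_biUnion hτ hyz))

end Subst
end SubstLemmas
section ListLemmas
variable {F : Type}

theorem substList_append (σ : Subst F) (l1 l2 : List (Trm F)) :
    substList σ (l1 ++ l2) = substList σ l1 ++ substList σ l2 :=
  List.map_append

theorem substList_length (σ : Subst F) (l : List (Trm F)) :
    (substList σ l).length = l.length := List.length_map _

theorem substList_comp (σ τ : Subst F) (l : List (Trm F)) :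
    substList (Subst.comp σ τ) l = substList τ (substList σ l) := by
  simp only [substList, List.map_map]
  exact List.map_congr_left fun t _ => (Trm.subst_subst σ τ t).symm

theorem mem_varsList {y : ℕ} {l : List (Trm F)} :
    y ∈ varsList l ↔ ∃ t ∈ l, y ∈ t.vars := by
  simp [varsList]

theorem varsList_append (l1 l2 : List (Trm F)) :
    varsList (l1 ++ l2) = varsList l1 ∪ varsList l2 := by
  ext y; simp [mem_varsList, or_and_right, exists_or]

theorem substList_congr {σ τ : Subst F} {l : List (Trm F)}
    (h : ∀ y ∈ varsList l, σ y = τ y) : substList σ l = substList τ l :=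
  List.map_congr_left fun t ht =>
    Trm.subst_congr fun y hy => h y (mem_varsList.2 ⟨t, ht, hy⟩)

theorem substList_eq_self {σ : Subst F} {l : List (Trm F)}
    (h : ∀ y ∈ varsList l, σ y = .var y) : substList σ l = l := by
  rw [substList_congr (τ := Subst.id) h]
  show List.map (Trm.subst Subst.id) l = l
  exact (List.map_congr_left (g := id) fun t _ => Trm.subst_id t).trans (List.map_id l)

theorem eq_var_of_substList_self {σ : Subst F} {l : List (Trm F)}
    (h : substList σ l = l) : ∀ y ∈ varsList l, σ y = .var y := by
  intro y hy
  rcases mem_varsList.1 hy with ⟨t, ht, hyt⟩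
  have h' : l.map (Trm.subst σ) = l.map id := by simpa [substList] using h
  have : t.subst σ = t := List.map_eq_map_iff.1 h' t ht
  exact Trm.eq_var_of_mem_of_subst_self this y hyt

end ListLemmas
section Equations
variable {F : Type}

/-- `σ` unifies a list of term equations. -/
def UnifiesE (σ : Subst F) (E : List (Trm F × Trm F)) : Prop :=
  ∀ e ∈ E, e.1.subst σ = e.2.subst σ

/-- `η` is an mgu of a list of term equations. -/
def MguE (η : Subst F) (E : List (Trm F × Trm F)) : Prop :=
  UnifiesE η E ∧ ∀ σ : Subst F, UnifiesE σ E → ∃ γ : Subst F, Subst.comp η γ = σ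

/-- Variables of a list of equations. -/
def varsE (E : List (Trm F × Trm F)) : Finset ℕ :=
  (E.map (fun e => e.1.varsF ∪ e.2.varsF)).foldr (· ∪ ·) ∅

/-- Size of a list of equations. -/
def sizeE (E : List (Trm F × Trm F)) : ℕ :=
  (E.map (fun e => e.1.tsize + e.2.tsize)).sum

/-- Applying a substitution to a list of equations. -/
def substE (δ : Subst F) (E : List (Trm F × Trm F)) : List (Trm F × Trm F) :=
  E.map (fun e => (e.1.subst δ, e.2.subst δ))

theorem mem_varsE {y : ℕ} {E : List (Trm F × Trm F)} :
    y ∈ varsE E ↔ ∃ e ∈ E, y ∈ e.1.varsF ∨ y ∈ e.2.varsF := by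
  unfold varsE
  induction E with
  | nil => simp
  | cons a l ih =>
    simp only [List.map_cons, List.foldr_cons, Finset.mem_union, ih, List.mem_cons]
    constructor
    · rintro (h | ⟨e, he, hy⟩)
      · exact ⟨a, Or.inl rfl, by simpa using h⟩
      · exact ⟨e, Or.inr he, hy⟩
    · rintro ⟨e, (rfl | he), hy⟩
      exacts [Or.inl (by simpa using hy), Or.inr ⟨e, he, hy⟩]

theorem unifiesE_substE {σ δ : Subst F} {E : List (Trm F × Trm F)} :
    UnifiesE σ (substE δ E) ↔ UnifiesE (Subst.comp δ σ) E := by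
  unfold UnifiesE substE
  constructor
  · intro h e he
    have := h (e.1.subst δ, e.2.subst δ) (List.mem_map_of_mem he)
    simpa [Trm.subst_subst] using this
  · intro h e he
    rcases List.mem_map.1 he with ⟨e0, he0, rfl⟩
    simpa [Trm.subst_subst] using h e0 he0

theorem sizeE_append (E1 E2 : List (Trm F × Trm F)) :
    sizeE (E1 ++ E2) = sizeE E1 + sizeE E2 := by
  simp [sizeE]

theorem unifiesE_zip_append {σ : Subst F} {ts us : List (Trm F)}
    {E : List (Trm F × Trm F)} (hlen : ts.length = us.length) :
    UnifiesE σ (ts.zip us ++ E) ↔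
      (substList σ ts = substList σ us ∧ UnifiesE σ E) := by
  unfold UnifiesE
  constructor
  · intro h
    refine ⟨?_, fun e he => h e (List.mem_append_right _ he)⟩
    apply List.ext_getElem (by simp [substList, hlen])
    intro i h1 h2
    have hits : i < ts.length := by simpa [substList] using h1
    have hius : i < us.length := by simpa [substList] using h2
    simp only [substList, List.getElem_map]
    have hmem : (ts[i], us[i]) ∈ ts.zip us := by
      have hzl : i < (ts.zip us).length := by simp [hlen]; omega
      have := List.getElem_zip (i := i) (h := hzl)
      rw [← this]
      exact List.getElem_mem _
    exact h _ (List.mem_append_left _ hmem)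
  · rintro ⟨h1, h2⟩ e he
    rcases List.mem_append.1 he with he | he
    · rcases List.mem_iff_getElem.1 he with ⟨i, hi, rfl⟩
      have hi' : i < ts.length := by simp [hlen] at hi ⊢; omega
      rw [List.getElem_zip]
      have := congrArg (fun l => l.getD i (Trm.var 0)) h1
      simpa [substList, List.getD_eq_getElem?_getD, hi', hlen ▸ hi'] using this
    · exact h2 e he

theorem varsE_zip_cons_subset {f g : F} {ts us : List (Trm F)}
    {E : List (Trm F × Trm F)} :
    varsE (ts.zip us ++ E) ⊆ varsE ((Trm.fn f ts, Trm.fn g us) :: E) := by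
  intro y hy
  rcases mem_varsE.1 hy with ⟨e, he, hcase⟩
  rcases List.mem_append.1 he with he | he
  · have hz := List.of_mem_zip he
    apply mem_varsE.2
    refine ⟨(Trm.fn f ts, Trm.fn g us), List.mem_cons_self, ?_⟩
    rcases hcase with h | h
    · exact Or.inl (Trm.mem_varsF_fn.2 ⟨e.1, hz.1, h⟩)
    · exact Or.inr (Trm.mem_varsF_fn.2 ⟨e.2, hz.2, h⟩)
  · exact mem_varsE.2 ⟨e, List.mem_cons_of_mem _ he, hcase⟩

end Equations
section Steps
variable {F : Type}

/-- Single-binding substitution `{x ↦ b}`. -/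
def elimS (x : ℕ) (b : Trm F) : Subst F := fun y => if y = x then b else .var y

theorem elimS_self (x : ℕ) (b : Trm F) : elimS x b x = b := by simp [elimS]

theorem elimS_other {x y : ℕ} (b : Trm F) (h : y ≠ x) : elimS x b y = .var y := by
  simp [elimS, h]

theorem comp_elimS_eq_self {σ : Subst F} {x : ℕ} {b : Trm F}
    (h : σ x = b.subst σ) : Subst.comp (elimS x b) σ = σ := by
  funext y
  by_cases hy : y = x
  · subst hy; simp [Subst.comp, elimS_self, h]
  · simp [Subst.comp, elimS_other b hy]

theorem subst_elimS_eq_self {x : ℕ} {b : Trm F} {t : Trm F} (h : x ∉ t.vars) :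
    t.subst (elimS x b) = t :=
  Trm.subst_eq_self fun y hy => elimS_other b (fun hyx => h (hyx ▸ hy))

theorem vars_elimS_subset (x : ℕ) (b : Trm F) :
    (elimS x b).vars ⊆ {x} ∪ ↑b.varsF := by
  intro y hy
  rcases hy with hy | hy
  · have hy' : elimS x b y ≠ .var y := hy
    by_cases h : y = x
    · exact Or.inl h
    · exact absurd (elimS_other b h) hy'
  · rcases Set.mem_iUnion₂.1 hy with ⟨z, hz, hyz⟩
    have hz' : elimS x b z ≠ .var z := hz
    by_cases h : z = x
    · subst h
      rw [elimS_self] at hyz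
      exact Or.inr (by simpa [Trm.mem_varsF_iff] using hyz)
    · exact absurd (elimS_other b h) hz'

theorem mem_varsF_subst {σ : Subst F} {t : Trm F} {y : ℕ} :
    y ∈ (t.subst σ).varsF ↔ ∃ z ∈ t.varsF, y ∈ (σ z).varsF := by
  simp only [Trm.mem_varsF_iff]
  exact Trm.mem_vars_subst

theorem varsE_elim_subset {x : ℕ} {b : Trm F} {E : List (Trm F × Trm F)}
    (hx : x ∉ b.varsF) :
    varsE (substE (elimS x b) E) ⊆ (varsE ((Trm.var x, b) :: E)).erase x := by
  intro y hy
  rcases mem_varsE.1 hy with ⟨e, he, hcase⟩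
  rcases List.mem_map.1 he with ⟨e0, he0, rfl⟩
  have key : ∀ (t : Trm F), y ∈ (t.subst (elimS x b)).varsF →
      y ≠ x ∧ (y ∈ t.varsF ∨ y ∈ b.varsF) := by
    intro t hyt
    rcases mem_varsF_subst.1 hyt with ⟨z, hz, hyz⟩
    by_cases h : z = x
    · subst h
      rw [elimS_self] at hyz
      exact ⟨fun hyx => hx (hyx ▸ hyz), Or.inr hyz⟩
    · rw [elimS_other b h] at hyz
      simp at hyz
      subst hyz
      exact ⟨h, Or.inl hz⟩
  have hbase : y ∈ varsE ((Trm.var x, b) :: E) → y ≠ x → y ∈ (varsE ((Trm.var x, b) :: E)).erase x :=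
    fun h1 h2 => Finset.mem_erase.2 ⟨h2, h1⟩
  rcases hcase with h | h
  · rcases key e0.1 h with ⟨hne, (h1 | h1)⟩
    · exact hbase (mem_varsE.2 ⟨e0, List.mem_cons_of_mem _ he0, Or.inl h1⟩) hne
    · exact hbase (mem_varsE.2 ⟨(Trm.var x, b), List.mem_cons_self, Or.inr h1⟩) hne
  · rcases key e0.2 h with ⟨hne, (h1 | h1)⟩
    · exact hbase (mem_varsE.2 ⟨e0, List.mem_cons_of_mem _ he0, Or.inr h1⟩) hne
    · exact hbase (mem_varsE.2 ⟨(Trm.var x, b), List.mem_cons_self, Or.inr h1⟩) hne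

theorem mguE_nil : MguE (Subst.id : Subst F) [] := by
  constructor
  · intro e he; simp at he
  · intro σ _; exact ⟨σ, by simp⟩

theorem mguE_triv {η : Subst F} {a : Trm F} {E : List (Trm F × Trm F)}
    (h : MguE η E) : MguE η ((a, a) :: E) := by
  constructor
  · intro e he
    rcases List.mem_cons.1 he with rfl | he
    · rfl
    · exact h.1 e he
  · intro σ hσ
    exact h.2 σ (fun e he => hσ e (List.mem_cons_of_mem _ he))

theorem mguE_elim {η : Subst F} {x : ℕ} {b : Trm F} {E : List (Trm F × Trm F)}
    (hx : x ∉ b.varsF)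
    (h : MguE η (substE (elimS x b) E)) :
    MguE (Subst.comp (elimS x b) η) ((Trm.var x, b) :: E) := by
  have hxv : x ∉ b.vars := fun hc => hx (Trm.mem_varsF_iff.2 hc)
  constructor
  · intro e he
    rcases List.mem_cons.1 he with rfl | he
    · show (Trm.var x).subst _ = b.subst _
      simp only [Trm.subst_var]
      have hL : Subst.comp (elimS x b) η x = b.subst η := by
        simp [Subst.comp, elimS_self]
      rw [hL, ← Trm.subst_subst, subst_elimS_eq_self hxv]
    · have := unifiesE_substE.1 h.1
      exact this e he
  · intro σ hσ
    have hσx : σ x = b.subst σ := by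
      have := hσ (Trm.var x, b) (List.mem_cons_self)
      simpa using this
    have hσE : UnifiesE σ (substE (elimS x b) E) := by
      rw [unifiesE_substE, comp_elimS_eq_self hσx]
      exact fun e he => hσ e (List.mem_cons_of_mem _ he)
    rcases h.2 σ hσE with ⟨γ, hγ⟩
    exact ⟨γ, by rw [Subst.comp_assoc, hγ, comp_elimS_eq_self hσx]⟩

theorem mguE_decomp {η : Subst F} {f : F} {ts us : List (Trm F)}
    {E : List (Trm F × Trm F)} (hlen : ts.length = us.length)
    (h : MguE η (ts.zip us ++ E)) :
    MguE η ((Trm.fn f ts, Trm.fn f us) :: E) := by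
  have h1 := (unifiesE_zip_append hlen).1 h.1
  constructor
  · intro e he
    rcases List.mem_cons.1 he with rfl | he
    · show (Trm.fn f ts).subst η = (Trm.fn f us).subst η
      simp only [Trm.subst_fn]
      exact congrArg _ h1.1
    · exact h1.2 e he
  · intro σ hσ
    have hfn : (Trm.fn f ts).subst σ = (Trm.fn f us).subst σ :=
      hσ _ (List.mem_cons_self)
    simp only [Trm.subst_fn, Trm.fn.injEq, true_and] at hfn
    apply h.2 σ
    rw [unifiesE_zip_append hlen]
    exact ⟨hfn, fun e he => hσ e (List.mem_cons_of_mem _ he)⟩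

theorem not_unifies_occurs {x : ℕ} {b : Trm F} (hx : x ∈ b.vars) (hb : b ≠ .var x)
    (σ : Subst F) : σ x ≠ b.subst σ := by
  intro h
  have := Trm.tsize_subst_lt (σ := σ) hx hb
  rw [← h] at this
  omega

end Steps
section KeyMgu
variable {F : Type}

theorem vars_subst_id : (Subst.id : Subst F).vars = ∅ := by
  have hdom : (Subst.id : Subst F).dom = ∅ := by
    ext y; simp [Subst.dom, Subst.id]
  rw [Subst.vars, hdom]
  simp

theorem varsE_cons_subset {e : Trm F × Trm F} {E : List (Trm F × Trm F)} :
    varsE E ⊆ varsE (e :: E) := fun y hy => by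
  rcases mem_varsE.1 hy with ⟨e', he', h⟩
  exact mem_varsE.2 ⟨e', List.mem_cons_of_mem _ he', h⟩

theorem varsF_fst_subset {a b : Trm F} {E : List (Trm F × Trm F)} :
    a.varsF ⊆ varsE ((a, b) :: E) := fun y hy =>
  mem_varsE.2 ⟨(a, b), List.mem_cons_self, Or.inl hy⟩

theorem varsF_snd_subset {a b : Trm F} {E : List (Trm F × Trm F)} :
    b.varsF ⊆ varsE ((a, b) :: E) := fun y hy =>
  mem_varsE.2 ⟨(a, b), List.mem_cons_self, Or.inr hy⟩

theorem sizeE_cons (a b : Trm F) (E : List (Trm F × Trm F)) :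
    sizeE ((a, b) :: E) = a.tsize + b.tsize + sizeE E := by
  simp [sizeE]

theorem sizeE_zip {ts us : List (Trm F)} (hlen : ts.length = us.length) :
    sizeE (ts.zip us) = (ts.map Trm.tsize).sum + (us.map Trm.tsize).sum := by
  induction ts generalizing us with
  | nil => cases us with
    | nil => simp [sizeE]
    | cons u us => simp at hlen
  | cons t ts ih => cases us with
    | nil => simp at hlen
    | cons u us =>
      simp only [List.length_cons, Nat.succ_inj] at hlen
      simp only [List.zip_cons_cons, List.map_cons, List.sum_cons]
      rw [sizeE_cons, ih hlen]
      ring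

theorem mguE_swap_head {η : Subst F} {a b : Trm F} {E : List (Trm F × Trm F)}
    (h : MguE η ((b, a) :: E)) : MguE η ((a, b) :: E) := by
  have key : ∀ (σ : Subst F), UnifiesE σ ((a, b) :: E) ↔ UnifiesE σ ((b, a) :: E) := by
    intro σ
    constructor <;> intro hσ e he <;> rcases List.mem_cons.1 he with rfl | he
    · exact (hσ (a, b) (List.mem_cons_self)).symm
    · exact hσ e (List.mem_cons_of_mem _ he)
    · exact (hσ (b, a) (List.mem_cons_self)).symm
    · exact hσ e (List.mem_cons_of_mem _ he)
  exact ⟨(key η).2 h.1, fun σ hσ => h.2 σ ((key σ).1 hσ)⟩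

theorem varsE_swap_head_subset {a b : Trm F} {E : List (Trm F × Trm F)} :
    varsE ((b, a) :: E) ⊆ varsE ((a, b) :: E) := fun y hy => by
  rcases mem_varsE.1 hy with ⟨e, he, h⟩
  rcases List.mem_cons.1 he with rfl | he
  · exact mem_varsE.2 ⟨(a, b), List.mem_cons_self, h.symm⟩
  · exact mem_varsE.2 ⟨e, List.mem_cons_of_mem _ he, h⟩

/-- Key theorem: every unifiable list of equations has a relevant mgu. -/
theorem exists_relevant_mguE : ∀ (n m : ℕ) (E : List (Trm F × Trm F)),
    (varsE E).card ≤ n → sizeE E ≤ m → (∃ σ : Subst F, UnifiesE σ E) →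
    ∃ η : Subst F, MguE η E ∧ Subst.vars η ⊆ ↑(varsE E) := by
  intro n
  induction n using Nat.strong_induction_on with
  | _ n ihn =>
  intro m
  induction m using Nat.strong_induction_on with
  | _ m ihm =>
  intro E hcard hsize hex
  obtain ⟨σ0, hσ0⟩ := hex
  match E with
  | [] => exact ⟨Subst.id, mguE_nil, by rw [vars_subst_id]; simp⟩
  | (a, b) :: E' =>
    have hsz : sizeE ((a, b) :: E') = a.tsize + b.tsize + sizeE E' := sizeE_cons a b E'
    have hta := Trm.tsize_pos a
    have htb := Trm.tsize_pos b
    -- the elimination step, usable symmetrically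
    have elim : ∀ (x : ℕ) (c : Trm F), c.varsF ⊆ varsE ((a, b) :: E') →
        x ∈ varsE ((a, b) :: E') → (σ0 x = c.subst σ0) → c ≠ .var x →
        UnifiesE σ0 E' →
        ∃ η : Subst F, MguE η ((Trm.var x, c) :: E') ∧
          Subst.vars η ⊆ ↑(varsE ((a, b) :: E')) := by
      intro x c hcsub hxmem hux hcx hE'
      by_cases hoc : x ∈ c.varsF
      · exact absurd hux (not_unifies_occurs (Trm.mem_varsF_iff.1 hoc) hcx σ0)
      · -- eliminate x
        have hE'' : UnifiesE σ0 (substE (elimS x c) E') := by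
          rw [unifiesE_substE, comp_elimS_eq_self hux]
          exact hE'
        have hsubE : varsE (substE (elimS x c) E') ⊆ (varsE ((Trm.var x, c) :: E')).erase x :=
          varsE_elim_subset hoc
        have hsubE2 : (varsE ((Trm.var x, c) :: E')).erase x ⊆ varsE ((a, b) :: E') := by
          intro y hy
          have hy' := (Finset.mem_erase.1 hy).2
          rcases mem_varsE.1 hy' with ⟨e, he, hcase⟩
          rcases List.mem_cons.1 he with rfl | he
          · rcases hcase with h | h
            · simp at h
              exact absurd h (Finset.mem_erase.1 hy).1
            · exact hcsub h
          · exact mem_varsE.2 ⟨e, List.mem_cons_of_mem _ he, hcase⟩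
        have hcardlt : (varsE (substE (elimS x c) E')).card < n := by
          have h1 : (varsE (substE (elimS x c) E')).card ≤
              ((varsE ((a, b) :: E')).erase x).card :=
            Finset.card_le_card (fun y hy => by
              have := hsubE hy
              exact Finset.mem_erase.2 ⟨(Finset.mem_erase.1 this).1,
                hsubE2 this⟩)
          have h2 : ((varsE ((a, b) :: E')).erase x).card <
              (varsE ((a, b) :: E')).card :=
            Finset.card_erase_lt_of_mem hxmem
          omega
        obtain ⟨η'', hmgu'', hvars''⟩ :=
          ihn (varsE (substE (elimS x c) E')).card hcardlt
            (sizeE (substE (elimS x c) E')) _ le_rfl le_rfl ⟨σ0, hE''⟩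
        refine ⟨Subst.comp (elimS x c) η'', mguE_elim hoc hmgu'', ?_⟩
        intro y hy
        rcases Subst.vars_comp_subset _ _ hy with hy | hy
        · rcases vars_elimS_subset x c hy with rfl | hy
          · exact hxmem
          · exact hcsub hy
        · exact hsubE2 (hsubE (hvars'' hy))
    cases a with
    | var x =>
      by_cases hb : b = .var x
      · -- trivial equation
        subst hb
        have hszlt : sizeE E' < m := by omega
        obtain ⟨η, hmgu, hvars⟩ := ihm (sizeE E') hszlt E'
          (le_trans (Finset.card_le_card varsE_cons_subset) hcard) le_rfl
          ⟨σ0, fun e he => hσ0 e (List.mem_cons_of_mem _ he)⟩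
        exact ⟨η, mguE_triv hmgu,
          fun y hy => varsE_cons_subset (by exact_mod_cast hvars hy)⟩
      · have hux : σ0 x = b.subst σ0 := by
          have := hσ0 (Trm.var x, b) (List.mem_cons_self)
          simpa using this
        exact elim x b varsF_snd_subset
          (varsF_fst_subset (by simp))
          hux hb (fun e he => hσ0 e (List.mem_cons_of_mem _ he))
    | fn f ts =>
      cases b with
      | var x =>
        have hux : σ0 x = (Trm.fn f ts).subst σ0 := by
          have := hσ0 (Trm.fn f ts, Trm.var x) (List.mem_cons_self)
          simpa using this.symm
        have hne : Trm.fn f ts ≠ Trm.var x := by intro h; cases h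
        obtain ⟨η, hmgu, hvars⟩ := elim x (Trm.fn f ts) varsF_fst_subset
          (varsF_snd_subset (by simp)) hux hne
          (fun e he => hσ0 e (List.mem_cons_of_mem _ he))
        exact ⟨η, mguE_swap_head hmgu, hvars⟩
      | fn g us =>
        have hhead : (Trm.fn f ts).subst σ0 = (Trm.fn g us).subst σ0 :=
          hσ0 _ (List.mem_cons_self)
        simp only [Trm.subst_fn, Trm.fn.injEq] at hhead
        obtain ⟨hfg, hmap⟩ := hhead
        subst hfg
        have hlen : ts.length = us.length := by
          have := congrArg List.length hmap
          simpa using this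
        have hE'' : UnifiesE σ0 (ts.zip us ++ E') := by
          rw [unifiesE_zip_append hlen]
          exact ⟨hmap, fun e he => hσ0 e (List.mem_cons_of_mem _ he)⟩
        have hsz'' : sizeE (ts.zip us ++ E') < m := by
          rw [sizeE_append, sizeE_zip hlen]
          have h1 : (Trm.fn f ts).tsize = 1 + (ts.map Trm.tsize).sum := by simp
          have h2 : (Trm.fn f us).tsize = 1 + (us.map Trm.tsize).sum := by simp
          omega
        obtain ⟨η, hmgu, hvars⟩ := ihm (sizeE (ts.zip us ++ E')) hsz''
          (ts.zip us ++ E')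
          (le_trans (Finset.card_le_card varsE_zip_cons_subset) hcard) le_rfl
          ⟨σ0, hE''⟩
        exact ⟨η, mguE_decomp hlen hmgu,
          fun y hy => varsE_zip_cons_subset (by exact_mod_cast hvars hy)⟩

end KeyMgu
section PermExtend

theorem perm_closure {e : Equiv.Perm ℕ} {S : Set ℕ}
    (hs : ∀ x, x ∉ S → e x = x) : ∀ x ∈ S, e x ∈ S := by
  intro x hx
  by_contra hex
  have h1 : e (e x) = e x := hs _ hex
  have h2 : e x = x := e.injective h1
  exact hex (by rw [h2]; exact hx)

theorem exists_perm_extend (A : Finset ℕ) (c : ℕ → ℕ) (hc : Set.InjOn c ↑A) :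
    ∃ e : Equiv.Perm ℕ, (∀ a ∈ A, e a = c a) ∧
      ∀ x, x ∉ (↑A ∪ c '' ↑A : Set ℕ) → e x = x := by
  induction A using Finset.induction_on with
  | empty => exact ⟨Equiv.refl ℕ, by simp, fun _ _ => rfl⟩
  | @insert a A ha ih =>
    obtain ⟨e', he1, he2⟩ := ih (hc.mono (by intro x hx; simp only [Finset.coe_insert, Set.mem_insert_iff]; exact Or.inr hx))
    refine ⟨e'.trans (Equiv.swap (e' a) (c a)), ?_, ?_⟩
    · intro y hy
      rcases Finset.mem_insert.1 hy with rfl | hyA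
      · simp [Equiv.swap_apply_left]
      · have hya : y ≠ a := fun h => ha (h ▸ hyA)
        have hcy : e' y = c y := he1 y hyA
        have hne1 : c y ≠ e' a := by
          intro h
          by_cases haA : a ∈ (↑A ∪ c '' ↑A : Set ℕ)
          · -- e' a could be anything, use injectivity
            have : e' y = e' a := hcy.trans h
            exact hya (e'.injective this)
          · rw [he2 a haA] at h
            exact haA (Or.inr ⟨y, hyA, h⟩)
        have hne2 : c y ≠ c a :=
          fun h => hya (hc (Finset.mem_coe.2 (Finset.mem_insert.2 (Or.inr hyA)))
            (Finset.mem_coe.2 (Finset.mem_insert_self a A)) h)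
        simp only [Equiv.trans_apply, hcy]
        exact Equiv.swap_apply_of_ne_of_ne hne1 hne2
    · intro x hx
      have hxA : x ∉ (↑A ∪ c '' ↑A : Set ℕ) := by
        intro h
        apply hx
        rcases h with h | ⟨y, hy, rfl⟩
        · exact Or.inl (by simp [h])
        · exact Or.inr ⟨y, by simp [hy], rfl⟩
      have hex : e' x = x := he2 x hxA
      simp only [Equiv.trans_apply, hex]
      apply Equiv.swap_apply_of_ne_of_ne
      · intro h
        by_cases haA : a ∈ (↑A ∪ c '' ↑A : Set ℕ)
        · exact hxA (h ▸ perm_closure he2 a haA)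
        · rw [he2 a haA] at h
          exact hx (h ▸ Or.inl (by simp))
      · intro h
        exact hx (h ▸ Or.inr ⟨a, by simp, rfl⟩)

end PermExtend

section VarsLF
variable {F : Type}

/-- Finset of variables of a list of terms. -/
def varsLF (l : List (Trm F)) : Finset ℕ := (l.map Trm.varsF).foldr (· ∪ ·) ∅

theorem mem_varsLF {y : ℕ} {l : List (Trm F)} :
    y ∈ varsLF l ↔ y ∈ varsList l := by
  rw [mem_varsList]
  unfold varsLF
  induction l with
  | nil => simp
  | cons a l ih =>
    simp only [List.map_cons, List.foldr_cons, Finset.mem_union, ih, List.mem_cons]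
    constructor
    · rintro (h | ⟨t, ht, hy⟩)
      exacts [⟨a, Or.inl rfl, Trm.mem_varsF_iff.1 h⟩, ⟨t, Or.inr ht, hy⟩]
    · rintro ⟨t, (rfl | ht), hy⟩
      exacts [Or.inl (Trm.mem_varsF_iff.2 hy), Or.inr ⟨t, ht, hy⟩]

theorem atom_subst_comp {P : Type} (σ τ : Subst F) (A : Atom P F) :
    A.subst (Subst.comp σ τ) = (A.subst σ).subst τ := by
  simp [Atom.subst, substList_comp]

end VarsLF
theorem stmt0' {P F : Type} (p : P) (s t u v : List (Trm F))
    (h : ∃ θ : Subst F, Atom.IsMgu θ ⟨p, s, t⟩ ⟨p, u, v⟩ ∧ substList θ s = s) :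
    ∃ ϑ : Subst F, Atom.IsMgu ϑ ⟨p, s, t⟩ ⟨p, u, v⟩ ∧
      Atom.RelevantFor ϑ ⟨p, s, t⟩ ⟨p, u, v⟩ ∧ substList ϑ s = s := by
  classical
  obtain ⟨θ, hmgu, hs⟩ := h
  set A : Atom P F := ⟨p, s, t⟩ with hA
  set B : Atom P F := ⟨p, u, v⟩ with hB
  have hAvars : A.vars = varsList s ∪ varsList t := rfl
  have hBvars : B.vars = varsList u ∪ varsList v := rfl
  set V : Set ℕ := A.vars ∪ B.vars with hV
  have hθ1 : substList θ s = substList θ u ∧ substList θ t = substList θ v := by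
    have h0 : A.subst θ = B.subst θ := hmgu.1
    simp only [hA, hB, Atom.subst, Atom.mk.injEq, true_and] at h0
    exact h0
  have hlen_su : s.length = u.length := by
    have := congrArg List.length hθ1.1; simpa [substList] using this
  have hlen_tv : t.length = v.length := by
    have := congrArg List.length hθ1.2; simpa [substList] using this
  have hlen_zw : (s ++ t).length = (u ++ v).length := by
    simp [hlen_su, hlen_tv]
  have unif_iff : ∀ σ : Subst F,
      UnifiesE σ ((s ++ t).zip (u ++ v)) ↔ Atom.IsUnifier σ A B := by
    intro σ
    have h1 : UnifiesE σ ((s ++ t).zip (u ++ v)) ↔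
        substList σ (s ++ t) = substList σ (u ++ v) := by
      have h2 := unifiesE_zip_append (σ := σ) (E := ([] : List (Trm F × Trm F))) hlen_zw
      rw [List.append_nil] at h2
      rw [h2]
      have : UnifiesE σ ([] : List (Trm F × Trm F)) := fun e he => by simp at he
      exact ⟨fun h => h.1, fun h => ⟨h, this⟩⟩
    rw [h1]
    constructor
    · intro hzw
      have hzw' : substList σ s ++ substList σ t = substList σ u ++ substList σ v := by
        simpa [substList_append] using hzw
      obtain ⟨h1', h2'⟩ := List.append_inj hzw' (by simp [substList, hlen_su])
      show A.subst σ = B.subst σ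
      simp [hA, hB, Atom.subst, h1', h2']
    · intro hAB
      have h0 : substList σ s = substList σ u ∧ substList σ t = substList σ v := by
        have h0' : A.subst σ = B.subst σ := hAB
        simpa [hA, hB, Atom.subst, Atom.mk.injEq] using h0'
      simp [substList_append, h0.1, h0.2]
  obtain ⟨η, hmguE, hrelE⟩ := exists_relevant_mguE
    (varsE ((s ++ t).zip (u ++ v))).card (sizeE ((s ++ t).zip (u ++ v)))
    ((s ++ t).zip (u ++ v)) le_rfl le_rfl ⟨θ, (unif_iff θ).2 hmgu.1⟩
  have hEV : (↑(varsE ((s ++ t).zip (u ++ v))) : Set ℕ) ⊆ V := by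
    intro y hy
    rcases mem_varsE.1 hy with ⟨e, he, hcase⟩
    have hez := List.of_mem_zip he
    rcases hcase with hc | hc
    · have h1 : y ∈ varsList (s ++ t) :=
        mem_varsList.2 ⟨e.1, hez.1, Trm.mem_varsF_iff.1 hc⟩
      rw [varsList_append] at h1
      exact Or.inl (hAvars ▸ h1)
    · have h1 : y ∈ varsList (u ++ v) :=
        mem_varsList.2 ⟨e.2, hez.2, Trm.mem_varsF_iff.1 hc⟩
      rw [varsList_append] at h1
      exact Or.inr (hBvars ▸ h1)
  have hηmgu : Atom.IsMgu η A B :=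
    ⟨(unif_iff η).1 hmguE.1, fun σ hσ => hmguE.2 σ ((unif_iff σ).2 hσ)⟩
  have hrelη : Subst.vars η ⊆ V := fun y hy => hEV (hrelE hy)
  obtain ⟨γ, hγ⟩ := hmgu.2 η hηmgu.1
  obtain ⟨δ, hδ⟩ := hηmgu.2 θ hmgu.1
  have hθγδ : Subst.comp θ (Subst.comp γ δ) = θ := by
    rw [← Subst.comp_assoc, hγ, hδ]
  have hsγδ : substList (Subst.comp γ δ) s = s := by
    conv_lhs => rw [← hs]
    rw [← substList_comp, hθγδ, hs]
  have hpt : ∀ y ∈ varsList s, (γ y).subst δ = .var y := by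
    intro y hy
    exact eq_var_of_substList_self hsγδ y hy
  have hvarγ : ∀ y ∈ varsList s, ∃ cy, γ y = .var cy := by
    intro y hy
    cases hγy : γ y with
    | var c0 => exact ⟨c0, rfl⟩
    | fn f ts =>
      have h0 := hpt y hy
      rw [hγy] at h0
      simp only [Trm.subst_fn] at h0
      cases h0
  set c : ℕ → ℕ := fun y => if h : ∃ cy, γ y = Trm.var cy then h.choose else 0 with hcdef
  have hc : ∀ y ∈ varsList s, γ y = .var (c y) := by
    intro y hy
    have hex := hvarγ y hy
    simp only [hcdef, dif_pos hex]
    exact hex.choose_spec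
  have hδc : ∀ y ∈ varsList s, δ (c y) = .var y := by
    intro y hy
    have h0 := hpt y hy
    rw [hc y hy] at h0
    simpa using h0
  have hmemS : ∀ y, y ∈ varsLF s ↔ y ∈ varsList s := fun y => mem_varsLF
  have hinj : Set.InjOn c ↑(varsLF s) := by
    intro y1 h1 y2 h2 hcc
    have e1 := hδc y1 ((hmemS y1).1 (Finset.mem_coe.1 h1))
    have e2 := hδc y2 ((hmemS y2).1 (Finset.mem_coe.1 h2))
    rw [hcc] at e1
    rw [e1] at e2
    exact (Trm.var.injEq _ _ ▸ e2 : y1 = y2)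
  obtain ⟨e, he1, he2⟩ := exists_perm_extend (varsLF s) c hinj
  have hsV : varsList s ⊆ V := fun y hy => Or.inl (hAvars ▸ Or.inl hy)
  have hηs : substList η s = substList γ s := by
    rw [← hγ, substList_comp, hs]
  have hcV : ∀ y ∈ varsList s, c y ∈ V := by
    intro y hy
    rcases mem_varsList.1 hy with ⟨t0, ht0, hyt0⟩
    have h1 : c y ∈ varsList (substList γ s) := by
      apply mem_varsList.2
      refine ⟨t0.subst γ, List.mem_map_of_mem ht0, ?_⟩
      exact Trm.mem_vars_subst.2 ⟨y, hyt0, by rw [hc y hy]; simp⟩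
    rw [← hηs] at h1
    rcases mem_varsList.1 h1 with ⟨t1, ht1, hct1⟩
    rcases List.mem_map.1 ht1 with ⟨t2, ht2, rfl⟩
    rcases Trm.mem_vars_subst.1 hct1 with ⟨z0, hz0, hcz0⟩
    by_cases hd : η z0 = .var z0
    · rw [hd] at hcz0
      simp at hcz0
      subst hcz0
      exact hsV (mem_varsList.2 ⟨t2, ht2, hz0⟩)
    · exact hrelη (Or.inr (Set.mem_biUnion hd hcz0))
  set T : Set ℕ := ↑(varsLF s) ∪ c '' ↑(varsLF s) with hT
  have hTV : T ⊆ V := by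
    rintro x (hx | ⟨y, hy, rfl⟩)
    · exact hsV ((hmemS x).1 (Finset.mem_coe.1 hx))
    · exact hcV y ((hmemS y).1 (Finset.mem_coe.1 hy))
  have hsymm_fix : ∀ x, x ∉ T → e.symm x = x := by
    intro x hx
    have h0 := he2 x hx
    conv_lhs => rw [← h0]
    exact e.symm_apply_apply x
  have hsymmV : ∀ x ∈ V, e.symm x ∈ V := by
    intro x hx
    by_cases hxT : x ∈ T
    · exact hTV (perm_closure hsymm_fix x hxT)
    · rw [hsymm_fix x hxT]; exact hx
  set δr : Subst F := fun x => .var (e.symm x) with hδr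
  set δr' : Subst F := fun x => .var (e x) with hδr'
  have hrr' : Subst.comp δr δr' = Subst.id := by
    funext x
    simp [Subst.comp, hδr, hδr', Subst.id]
  set ϑ : Subst F := Subst.comp η δr with hϑ
  have hdomV : ∀ x, ϑ x ≠ .var x → x ∈ V := by
    intro x hx
    by_contra hxV
    apply hx
    have hηx : η x = .var x := by
      by_contra hd
      exact hxV (hrelη (Or.inl hd))
    show (η x).subst δr = .var x
    rw [hηx]
    simp only [Trm.subst_var]
    have h0 : e.symm x = x := hsymm_fix x (fun hT' => hxV (hTV hT'))
    show Trm.var (e.symm x) = Trm.var x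
    rw [h0]
  refine ⟨ϑ, ?_, ?_, ?_⟩
  · constructor
    · show A.subst ϑ = B.subst ϑ
      have h00 : A.subst η = B.subst η := hηmgu.1
      rw [hϑ, atom_subst_comp, atom_subst_comp, h00]
    · intro σ hσ
      obtain ⟨γσ, hγσ⟩ := hηmgu.2 σ hσ
      refine ⟨Subst.comp δr' γσ, ?_⟩
      rw [hϑ, Subst.comp_assoc, ← Subst.comp_assoc δr δr' γσ, hrr',
        Subst.id_comp, hγσ]
  · intro y hy
    rcases hy with hy | hy
    · exact hdomV y hy
    · rcases Set.mem_iUnion₂.1 hy with ⟨x, hxdom, hyx⟩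
      have hyx' : y ∈ ((η x).subst δr).vars := hyx
      rcases Trm.mem_vars_subst.1 hyx' with ⟨z0, hz0, hyz0⟩
      have hz0V : z0 ∈ V := by
        by_cases hd : η x = .var x
        · rw [hd] at hz0
          simp at hz0
          subst hz0
          exact hdomV _ hxdom
        · exact hrelη (Or.inr (Set.mem_biUnion hd hz0))
      have hyz : y = e.symm z0 := by
        rw [hδr] at hyz0
        simpa using hyz0
      rw [hyz]
      exact hsymmV z0 hz0V
  · rw [hϑ, substList_comp, hηs, ← substList_comp]
    apply substList_eq_self
    intro y hy
    show (γ y).subst δr = .var y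
    rw [hc y hy]
    simp only [Trm.subst_var]
    have hey : e y = c y := he1 y ((hmemS y).2 hy)
    show Trm.var (e.symm (c y)) = Trm.var y
    rw [← hey, e.symm_apply_apply]


/-- If there exists an mgu `θ` of `p(s,t)` and `p(u,v)` such that
`sθ = s`, then there exists a relevant mgu `ϑ` of `p(s,t)` and `p(u,v)` such
that `sϑ = s`. -/
theorem stmt0 {P F : Type} (p : P) (s t u v : List (Trm F))
    (h : ∃ θ : Subst F, Atom.IsMgu θ ⟨p, s, t⟩ ⟨p, u, v⟩ ∧ substList θ s = s) :
    ∃ ϑ : Subst F, Atom.IsMgu ϑ ⟨p, s, t⟩ ⟨p, u, v⟩ ∧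
      Atom.RelevantFor ϑ ⟨p, s, t⟩ ⟨p, u, v⟩ ∧ substList ϑ s = s :=
  stmt0' p s t u v h
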